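/- arXiv:1111.4973 — 6 statements merged into one kernel-verified Lean document; each statement's English description precedes it below -/
import Mathlib

section
/- Let a ≠ 0 and c be real numbers with c² > a² (i.e. |X(Yh)(0)| > |X²h(0)|). Then the first return matrix !![(4c² − a²)/a², −2c/a; 2c/a, −1] has two distinct real eigenvalues λ₊ ≠ λ₋ with λ₊ · λ₋ = 1 and |λ₊| ≠ 1 and |λ₋| ≠ 1; that is, the origin is a hyperbolic saddle fixed point of the first return map. -/
/-!
The first return matrix has determinant `1` and trace `t = 2 + 4 (c² - a²) / a² > 2`, so its
eigenvalues are the roots of `λ² - tλ + 1`: real, distinct and reciprocal, and `λ = ±1` would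
force `t = ±2`.
-/

lemma Matrix.hasEigenvalue_toLin'_fin_two_iff {R : Type*} [CommRing R] [IsDomain R]
    (M : Matrix (Fin 2) (Fin 2) R) (μ : R) :
    Module.End.HasEigenvalue (Matrix.toLin' M) μ ↔ μ ^ 2 - M.trace * μ + M.det = 0 := by
  rw [Module.End.hasEigenvalue_iff_isRoot_charpoly, Matrix.charpoly_toLin',
    Matrix.charpoly_fin_two]
  simp

lemma abs_ne_one_of_root_of_sq_ne_four {t μ : ℝ} (ht : t ^ 2 ≠ 4)
    (hμ : μ ^ 2 - t * μ + 1 = 0) : |μ| ≠ 1 := by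
  intro h
  rcases (abs_eq zero_le_one).mp h with rfl | rfl <;> exact ht (by nlinarith)

lemma exists_ne_roots_mul_eq_one_of_four_lt_sq {t : ℝ} (ht : 4 < t ^ 2) :
    ∃ l₁ l₂ : ℝ, l₁ ≠ l₂ ∧ l₁ * l₂ = 1 ∧
      l₁ ^ 2 - t * l₁ + 1 = 0 ∧ l₂ ^ 2 - t * l₂ + 1 = 0 := by
  set d := √(t ^ 2 - 4)
  have hd_sq : d ^ 2 = t ^ 2 - 4 := Real.sq_sqrt (by linarith)
  have hd_pos : 0 < d := Real.sqrt_pos.mpr (by linarith)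
  refine ⟨(t + d) / 2, (t - d) / 2, by linarith, by linear_combination -hd_sq / 4, ?_, ?_⟩ <;>
    linear_combination hd_sq / 4

noncomputable def firstReturnMatrix (a c : ℝ) : Matrix (Fin 2) (Fin 2) ℝ :=
  !![(4 * c ^ 2 - a ^ 2) / a ^ 2, -2 * c / a; 2 * c / a, -1]

section firstReturnMatrix

variable {a c : ℝ}

lemma firstReturnMatrix_det (ha : a ≠ 0) : (firstReturnMatrix a c).det = 1 := by
  rw [firstReturnMatrix, Matrix.det_fin_two_of]
  field_simp
  ring

lemma firstReturnMatrix_trace (ha : a ≠ 0) :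
    (firstReturnMatrix a c).trace = 2 + 4 * (c ^ 2 - a ^ 2) / a ^ 2 := by
  rw [firstReturnMatrix, Matrix.trace_fin_two_of]
  field_simp
  ring

lemma four_lt_firstReturnMatrix_trace_sq (ha : a ≠ 0) (h : a ^ 2 < c ^ 2) :
    4 < (firstReturnMatrix a c).trace ^ 2 := by
  have : 0 < 4 * (c ^ 2 - a ^ 2) / a ^ 2 := by
    apply div_pos <;> [linarith; positivity]
  rw [firstReturnMatrix_trace ha]
  nlinarith

end firstReturnMatrix

/-- For `c² > a²` the first return matrix has two distinct real eigenvalues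
`λ₊ ≠ λ₋` with `λ₊ λ₋ = 1`, `|λ₊| ≠ 1` and `|λ₋| ≠ 1`: the origin is a hyperbolic
saddle fixed point of the first return map. -/
theorem stmt_7 (a c : ℝ) (ha : a ≠ 0) (h : a ^ 2 < c ^ 2) :
    ∃ lp lm : ℝ, lp ≠ lm ∧ lp * lm = 1 ∧ |lp| ≠ 1 ∧ |lm| ≠ 1 ∧
      Module.End.HasEigenvalue
        (Matrix.toLin'
          (!![(4 * c ^ 2 - a ^ 2) / a ^ 2, -2 * c / a; 2 * c / a, -1] : Matrix (Fin 2) (Fin 2) ℝ))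
        lp ∧
      Module.End.HasEigenvalue
        (Matrix.toLin'
          (!![(4 * c ^ 2 - a ^ 2) / a ^ 2, -2 * c / a; 2 * c / a, -1] : Matrix (Fin 2) (Fin 2) ℝ))
        lm := by
  have htr := four_lt_firstReturnMatrix_trace_sq ha h
  obtain ⟨lp, lm, hne, hmul, hp, hm⟩ := exists_ne_roots_mul_eq_one_of_four_lt_sq htr
  have hchar {μ : ℝ} (hμ : μ ^ 2 - (firstReturnMatrix a c).trace * μ + 1 = 0) :
      Module.End.HasEigenvalue (Matrix.toLin' (firstReturnMatrix a c)) μ := by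
    rwa [Matrix.hasEigenvalue_toLin'_fin_two_iff, firstReturnMatrix_det ha]
  exact ⟨lp, lm, hne, hmul, abs_ne_one_of_root_of_sq_ne_four htr.ne' hp,
    abs_ne_one_of_root_of_sq_ne_four htr.ne' hm, hchar hp, hchar hm⟩
end

section
/- Let a ≠ 0 and c be real numbers with 0 < c² < a² (i.e. 0 < |X(Yh)(0)| < |X²h(0)|). Then the characteristic polynomial λ² − ((4c² − 2a²)/a²)λ + 1 of the first return matrix !![(4c² − a²)/a², −2c/a; 2c/a, −1] has no real root, and its two complex roots have modulus 1; that is, the origin is an elliptic fixed point of the first return map. -/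
/-!
The characteristic polynomial `λ² - tλ + 1` has trace `t = (4c² - 2a²)/a²`, and
`t² - 4 = 16c²(c² - a²)/a⁴ < 0`, so its discriminant is negative: there is no real root, the
two complex roots are conjugate, and their product `z * conj z = ‖z‖²` is the constant term `1`.
-/

open ComplexConjugate

theorem sq_sub_mul_add_ne_zero_of_sq_lt {s p : ℝ} (hdisc : s ^ 2 < 4 * p) (x : ℝ) :
    x ^ 2 - s * x + p ≠ 0 := by
  nlinarith [sq_nonneg (2 * x - s)]

theorem Complex.normSq_eq_of_sq_sub_mul_add_eq_zero {s p : ℝ} (hdisc : s ^ 2 < 4 * p) {z : ℂ}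
    (hz : z ^ 2 - s * z + p = 0) : normSq z = p := by
  have hconj : conj z ^ 2 - s * conj z + p = 0 := by
    simpa only [map_sub, map_add, map_mul, map_pow, conj_ofReal, map_zero] using
      congrArg conj hz
  have hne : z - conj z ≠ 0 := by
    rw [sub_ne_zero, ne_comm, Ne, conj_eq_iff_re]
    intro hre
    apply sq_sub_mul_add_ne_zero_of_sq_lt hdisc z.re
    exact_mod_cast hre ▸ hz
  have hsum : z + conj z = s := by
    have hvieta : (z - conj z) * (z + conj z - s) = 0 := by linear_combination hz - hconj
    exact sub_eq_zero.mp ((mul_eq_zero.mp hvieta).resolve_left hne)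
  have hprod : z * conj z = p := by linear_combination z * hsum - hz
  exact_mod_cast (mul_conj z).symm.trans hprod

theorem sq_div_sq_sub_two_lt_four {a c : ℝ} (hc : 0 < c ^ 2) (h : c ^ 2 < a ^ 2) :
    ((4 * c ^ 2 - 2 * a ^ 2) / a ^ 2) ^ 2 < 4 * 1 := by
  rw [div_pow, div_lt_iff₀ (pow_pos (hc.trans h) 2)]
  nlinarith [mul_pos hc (sub_pos.mpr h)]

theorem stmt_8_general (a c : ℝ) (hc : 0 < c ^ 2) (h : c ^ 2 < a ^ 2) :
    (∀ l : ℝ, l ^ 2 - (4 * c ^ 2 - 2 * a ^ 2) / a ^ 2 * l + 1 ≠ 0) ∧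
    (∀ z : ℂ, z ^ 2 - (((4 * c ^ 2 - 2 * a ^ 2) / a ^ 2 : ℝ) : ℂ) * z + 1 = 0 →
      ‖z‖ = 1) := by
  have hdisc := sq_div_sq_sub_two_lt_four hc h
  refine ⟨sq_sub_mul_add_ne_zero_of_sq_lt hdisc, fun z hz => ?_⟩
  have hnorm := Complex.normSq_eq_of_sq_sub_mul_add_eq_zero hdisc (by exact_mod_cast hz)
  rw [Complex.norm_def, hnorm, Real.sqrt_one]

/-- For `0 < c² < a²` the characteristic polynomial `λ² - ((4c² - 2a²)/a²) λ + 1`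
of the first return matrix has no real root, and its complex roots have modulus 1:
the origin is an elliptic fixed point of the first return map. -/
theorem stmt_8 (a c : ℝ) (ha : a ≠ 0) (hc : 0 < c ^ 2) (h : c ^ 2 < a ^ 2) :
    (∀ l : ℝ, l ^ 2 - (4 * c ^ 2 - 2 * a ^ 2) / a ^ 2 * l + 1 ≠ 0) ∧
    (∀ z : ℂ, z ^ 2 - (((4 * c ^ 2 - 2 * a ^ 2) / a ^ 2 : ℝ) : ℂ) * z + 1 = 0 →
      ‖z‖ = 1) :=
  stmt_8_general a c hc h
end

section
/- Let a ≠ 0 and c be real numbers. The first return map M(x, y) = (((4c² − a²)/a²)x − (2c/a)y, (2c/a)x − y) has a fixed point (x, y) ≠ (0, 0) if and only if c = a or c = −a; moreover, if c = a then every point of the line y = x is fixed by M, and if c = −a then every point of the line y = −x is fixed by M. In particular, if c ≠ a and c ≠ −a (i.e. the two-fold is simple) then the origin is the only fixed point of M. -/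
/-!
The fixed-point equation `M p = p` is linear: clearing the denominators `a` and `a²` it reduces
to `c x = a y` together with `(c - a)(c + a) x = 0`. If `c ≠ ±a` the second equation forces
`x = 0` and then the first forces `y = 0`; if `c = a` (resp. `c = -a`) both equations hold on
the whole line `y = x` (resp. `y = -x`).
-/

section ReturnMap

variable {K : Type*} [Field K]

def returnMap (a c : K) (p : K × K) : K × K :=
  (((4 * c ^ 2 - a ^ 2) / a ^ 2) * p.1 - 2 * c / a * p.2, 2 * c / a * p.1 - p.2)

theorem returnMap_eq_self_iff [NeZero (2 : K)] {a : K} (c : K) (ha : a ≠ 0) (p : K × K) :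
    returnMap a c p = p ↔ c * p.1 = a * p.2 ∧ (c - a) * (c + a) * p.1 = 0 := by
  obtain ⟨x, y⟩ := p
  have two_ne : (2 : K) ≠ 0 := two_ne_zero
  simp only [returnMap, Prod.mk.injEq]
  constructor
  · rintro ⟨h₁, h₂⟩
    field_simp at h₁ h₂
    have hline : c * x = a * y := mul_left_cancel₀ two_ne (by linear_combination h₂)
    refine ⟨hline, mul_left_cancel₀ (mul_ne_zero two_ne ha) ?_⟩
    linear_combination a * h₁ - 2 * a * c * hline
  · rintro ⟨hline, hquad⟩
    constructor
    · field_simp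
      linear_combination 2 * hquad + 2 * c * hline
    · field_simp
      linear_combination 2 * hline

theorem returnMap_diag {a : K} (ha : a ≠ 0) (x : K) : returnMap a a (x, x) = (x, x) := by
  simp only [returnMap, Prod.mk.injEq]
  constructor <;> field_simp <;> ring

theorem returnMap_antidiag {a : K} (ha : a ≠ 0) (x : K) :
    returnMap a (-a) (x, -x) = (x, -x) := by
  simp only [returnMap, Prod.mk.injEq]
  constructor <;> field_simp <;> ring

theorem eq_zero_of_returnMap_eq_self [NeZero (2 : K)] {a c : K} (ha : a ≠ 0) (hca : c ≠ a)
    (hcna : c ≠ -a) {p : K × K} (hp : returnMap a c p = p) : p = (0, 0) := by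
  obtain ⟨hline, hquad⟩ := (returnMap_eq_self_iff c ha p).1 hp
  have hx : p.1 = 0 :=
    (mul_eq_zero.1 hquad).resolve_left
      (mul_ne_zero (sub_ne_zero.2 hca) fun h => hcna (eq_neg_of_add_eq_zero_left h))
  have hy : p.2 = 0 := by
    rw [hx, mul_zero] at hline
    exact (mul_eq_zero.1 hline.symm).resolve_left ha
  exact Prod.ext hx hy

theorem exists_returnMap_eq_self_iff [NeZero (2 : K)] {a : K} (c : K) (ha : a ≠ 0) :
    (∃ p : K × K, p ≠ (0, 0) ∧ returnMap a c p = p) ↔ c = a ∨ c = -a := by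
  constructor
  · rintro ⟨p, hp, hfix⟩
    by_contra! hc
    exact hp (eq_zero_of_returnMap_eq_self ha hc.1 hc.2 hfix)
  · rintro (rfl | rfl)
    · exact ⟨(1, 1), by simp, returnMap_diag ha 1⟩
    · exact ⟨(1, -1), by simp, returnMap_antidiag ha 1⟩

end ReturnMap

/-- The first return map `M(x, y) = (((4c² - a²)/a²) x - (2c/a) y, (2c/a) x - y)`
has a nonzero fixed point iff `c = a` or `c = -a`; if `c = a` every point of the line
`y = x` is fixed, if `c = -a` every point of the line `y = -x` is fixed, and in the
simple case `c ≠ ±a` the origin is the only fixed point. -/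
theorem stmt_10 (a c : ℝ) (ha : a ≠ 0) :
    let M : ℝ × ℝ → ℝ × ℝ := fun p =>
      (((4 * c ^ 2 - a ^ 2) / a ^ 2) * p.1 - 2 * c / a * p.2, 2 * c / a * p.1 - p.2)
    ((∃ p : ℝ × ℝ, p ≠ (0, 0) ∧ M p = p) ↔ (c = a ∨ c = -a)) ∧
    (c = a → ∀ x : ℝ, M (x, x) = (x, x)) ∧
    (c = -a → ∀ x : ℝ, M (x, -x) = (x, -x)) ∧
    (c ≠ a → c ≠ -a → ∀ p : ℝ × ℝ, M p = p → p = (0, 0)) := by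
  refine ⟨exists_returnMap_eq_self_iff c ha, ?_, ?_, ?_⟩
  · rintro rfl
    exact returnMap_diag ha
  · rintro rfl
    exact returnMap_antidiag ha
  · exact fun hca hcna _ => eq_zero_of_returnMap_eq_self ha hca hcna
end

section
/- Let a, c, α be real numbers with a ≠ 0 and c ≠ 0, let n ≥ 1 be a natural number, and set β = (4c² − a²)/a² − 2αc/a. If β^n = 1 and β^(n−1)·(2c/a − α) = α (i.e. the n-th iterate of the first return map fixes the points (x, αx) of the line C_α), then either α = 1 and c = a, or α = −1 and c = −a. Consequently: a simple reversible two-fold (c ≠ ±a) has no k-periodic orbits for any k ∈ ℕ, and a non-simple one can have them only along the lines x = y or x = −y. -/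
/-!
Multiplying the second fixed-point condition by `β` and using `β ^ n = 1` gives
`γ - α = α β` with `γ = 2c/a`. Substituting `γ = α (1 + β)` into `β = γ² - 1 - α γ` factors as
`(β + 1) (α² β - 1) = 0`; the factor `β + 1` vanishes only when `γ = 0`, i.e. `c = 0`.
Hence `α² β = 1`, so `β > 0`, and a positive real with `β ^ n = 1` is `1`. Then `α² = 1`
and `γ = 2α`, i.e. `c = α a`.
-/

theorem eq_mul_of_pow_succ_eq_one {M : Type*} [CommMonoid M] {α β v : M} {m : ℕ}
    (hβ : β ^ (m + 1) = 1) (h : β ^ m * v = α) : v = α * β :=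
  calc v = β ^ (m + 1) * v := by rw [hβ, one_mul]
    _ = α * β := by rw [← h, pow_succ, mul_right_comm]

theorem sq_mul_eq_one_of_sub_eq_mul {K : Type*} [Field K] {α β γ : K} (hγ : γ ≠ 0)
    (hβ : β = γ ^ 2 - 1 - α * γ) (h : γ - α = α * β) : α ^ 2 * β = 1 := by
  have hfactor : (β + 1) * (α ^ 2 * β - 1) = 0 := by
    linear_combination (-1 : K) * hβ + (α - α * (1 + β) - γ) * h
  have hβ_ne : β + 1 ≠ 0 := fun h0 => hγ (by linear_combination h + α * h0)
  exact sub_eq_zero.mp ((mul_eq_zero.mp hfactor).resolve_left hβ_ne)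

/-- If the `n`-th iterate (`n ≥ 1`) of the first return map fixes the points `(x, αx)`
of the line `C_α`, i.e. `β^n = 1` and `β^(n-1) (2c/a - α) = α` where
`β = (4c² - a²)/a² - 2αc/a`, then either `α = 1` and `c = a`, or `α = -1` and `c = -a`.
Consequently a simple reversible two-fold (`c ≠ ±a`) has no `k`-periodic orbits, and a
non-simple one can have them only along the lines `x = y` or `x = -y`. -/
theorem stmt_11 (a c α : ℝ) (ha : a ≠ 0) (hc : c ≠ 0) (n : ℕ) (hn : 1 ≤ n)
    (β : ℝ) (hβ : β = (4 * c ^ 2 - a ^ 2) / a ^ 2 - 2 * α * c / a)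
    (h1 : β ^ n = 1) (h2 : β ^ (n - 1) * (2 * c / a - α) = α) :
    (α = 1 ∧ c = a) ∨ (α = -1 ∧ c = -a) := by
  obtain ⟨m, rfl⟩ : ∃ m, n = m + 1 := ⟨n - 1, by omega⟩
  rw [Nat.add_sub_cancel] at h2
  have hγ : 2 * c / a ≠ 0 := div_ne_zero (mul_ne_zero two_ne_zero hc) ha
  have hβγ : β = (2 * c / a) ^ 2 - 1 - α * (2 * c / a) := by rw [hβ]; field_simp; ring
  have hfix : 2 * c / a - α = α * β := eq_mul_of_pow_succ_eq_one h1 h2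
  have hsq : α ^ 2 * β = 1 := sq_mul_eq_one_of_sub_eq_mul hγ hβγ hfix
  have hβ_pos : 0 < β := pos_of_mul_pos_right (hsq ▸ one_pos) (sq_nonneg α)
  have hβ1 : β = 1 := (pow_eq_one_iff_of_nonneg hβ_pos.le m.succ_ne_zero).mp h1
  have hα : α ^ 2 = 1 := by simpa [hβ1] using hsq
  have hca : c = α * a := by
    rw [hβ1, div_sub' ha, div_eq_iff ha] at hfix
    linarith
  rcases sq_eq_one_iff.mp hα with rfl | rfl
  · exact Or.inl ⟨rfl, by simpa using hca⟩
  · exact Or.inr ⟨rfl, by simpa using hca⟩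
end

section
/- Let a, b, c, d be nonzero real numbers and let (x, y) ∈ ℝ² with (x, y) ≠ (0, 0). Then φ₁(x, y) = φ₂(x, y) if and only if c·d = a·b and a·y = c·x; that is, a pseudo periodic orbit can exist only when X(Yh)(0)·Y(Xh)(0) = X²h(0)·Y²h(0) and the point lies on the line C_{λ*} with λ* = c/a. -/
/-!
Componentwise, `φ₁(x, y) = φ₂(x, y)` is the linear system `c x = a y`, `b x = d y`. It has a
nonzero solution only if its determinant `a b - c d` vanishes, and then (as `c ≠ 0`) the second
equation follows from the first.
-/

lemma mul_eq_mul_of_nontrivial_solution {K : Type*} [Field K] {a b c d x y : K}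
    (hxy : (x, y) ≠ (0, 0)) (h₁ : c * x = a * y) (h₂ : b * x = d * y) : c * d = a * b := by
  have hx : (c * d - a * b) * x = 0 := by linear_combination d * h₁ - a * h₂
  have hy : (c * d - a * b) * y = 0 := by linear_combination b * h₁ - c * h₂
  by_contra hdet
  have hdet' : c * d - a * b ≠ 0 := sub_ne_zero.mpr hdet
  exact hxy (Prod.ext ((mul_eq_zero.mp hx).resolve_left hdet')
    ((mul_eq_zero.mp hy).resolve_left hdet'))

lemma mul_eq_mul_of_det_eq_zero {K : Type*} [Field K] {a b c d x y : K} (hc : c ≠ 0)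
    (hdet : c * d = a * b) (h : a * y = c * x) : b * x = d * y :=
  mul_left_cancel₀ hc (by linear_combination (-b) * h - y * hdet)

lemma phi_fst_eq_iff {a b c d : ℝ} (ha : a ≠ 0) (hb : b ≠ 0) (hd : d ≠ 0) (x y : ℝ) :
    (-1 + 4 * c * d / (a * b)) * x - 2 * d / b * y = -x + 2 * d / b * y ↔ c * x = a * y := by
  have hdiff : (-1 + 4 * c * d / (a * b)) * x - 2 * d / b * y - (-x + 2 * d / b * y)
      = 4 * d / (a * b) * (c * x - a * y) := by
    field_simp
    ring
  rw [← sub_eq_zero, hdiff, mul_eq_zero, sub_eq_zero]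
  have : 4 * d / (a * b) ≠ 0 := by positivity
  simp [this]

lemma phi_snd_eq_iff {a b c d : ℝ} (ha : a ≠ 0) (hb : b ≠ 0) (hc : c ≠ 0) (x y : ℝ) :
    2 * c / a * x - y = -(2 * c / a) * x + (4 * c * d / (a * b) - 1) * y ↔ b * x = d * y := by
  have hdiff : 2 * c / a * x - y - (-(2 * c / a) * x + (4 * c * d / (a * b) - 1) * y)
      = 4 * c / (a * b) * (b * x - d * y) := by
    field_simp
    ring
  rw [← sub_eq_zero, hdiff, mul_eq_zero, sub_eq_zero]
  have : 4 * c / (a * b) ≠ 0 := by positivity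
  simp [this]

/-- For nonzero `a, b, c, d` and `(x, y) ≠ (0, 0)` we have `φ₁(x, y) = φ₂(x, y)` iff
`c d = a b` and `a y = c x`: a pseudo periodic orbit can exist only when
`X(Yh)(0) Y(Xh)(0) = X²h(0) Y²h(0)` and the point lies on the line `C_{λ*}`, `λ* = c/a`. -/
theorem stmt_14 (a b c d : ℝ) (ha : a ≠ 0) (hb : b ≠ 0) (hc : c ≠ 0) (hd : d ≠ 0)
    (x y : ℝ) (hxy : (x, y) ≠ ((0 : ℝ), (0 : ℝ))) :
    ((((-1 + 4 * c * d / (a * b)) * x - 2 * d / b * y, 2 * c / a * x - y) : ℝ × ℝ)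
        = ((-x + 2 * d / b * y, -(2 * c / a) * x + (4 * c * d / (a * b) - 1) * y) : ℝ × ℝ))
      ↔ (c * d = a * b ∧ a * y = c * x) := by
  rw [Prod.mk.injEq, phi_fst_eq_iff ha hb hd, phi_snd_eq_iff ha hb hc]
  constructor
  · rintro ⟨h₁, h₂⟩
    exact ⟨mul_eq_mul_of_nontrivial_solution hxy h₁ h₂, h₁.symm⟩
  · rintro ⟨hdet, h⟩
    exact ⟨h.symm, mul_eq_mul_of_det_eq_zero hc hdet h⟩
end

section
/- Let a, b, c, d be nonzero real numbers with c·d = a·b. Then every point p = (x, (c/a)x) of the line C_{λ*} with λ* = c/a satisfies φ₁(p) = p and φ₂(p) = p; that is, the line C_{λ*} consists entirely of fixed points of both fold-map compositions, giving a one-parameter family of periodic orbits. -/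
theorem stmt_15_general (a b c d : ℝ) (ha : a ≠ 0) (hb : b ≠ 0)
    (h : c * d = a * b) (x : ℝ) :
    ((((-1 + 4 * c * d / (a * b)) * x - 2 * d / b * (c / a * x),
        2 * c / a * x - c / a * x) : ℝ × ℝ) = (x, c / a * x)) ∧
    (((-x + 2 * d / b * (c / a * x),
        -(2 * c / a) * x + (4 * c * d / (a * b) - 1) * (c / a * x)) : ℝ × ℝ)
      = (x, c / a * x)) := by
  have hratio : c * d / (a * b) = 1 := by rw [h, div_self (mul_ne_zero ha hb)]
  have hdiag : 4 * c * d / (a * b) = 4 := by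
    rw [mul_assoc, mul_div_assoc, hratio, mul_one]
  have hoff : 2 * d / b * (c / a * x) = 2 * x := by
    calc 2 * d / b * (c / a * x) = 2 * (c * d / (a * b)) * x := by ring
      _ = 2 * x := by rw [hratio, mul_one]
  rw [hdiag, hoff]
  constructor <;> ext <;> ring

/-- For nonzero `a, b, c, d` with `c d = a b`, every point `p = (x, (c/a) x)` of the
line `C_{λ*}`, `λ* = c/a`, is a fixed point of both fold-map compositions `φ₁` and `φ₂`:
the line `C_{λ*}` gives a one-parameter family of periodic orbits. -/
theorem stmt_15 (a b c d : ℝ) (ha : a ≠ 0) (hb : b ≠ 0) (hc : c ≠ 0) (hd : d ≠ 0)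
    (h : c * d = a * b) (x : ℝ) :
    ((((-1 + 4 * c * d / (a * b)) * x - 2 * d / b * (c / a * x),
        2 * c / a * x - c / a * x) : ℝ × ℝ) = (x, c / a * x)) ∧
    (((-x + 2 * d / b * (c / a * x),
        -(2 * c / a) * x + (4 * c * d / (a * b) - 1) * (c / a * x)) : ℝ × ℝ)
      = (x, c / a * x)) :=
  stmt_15_general a b c d ha hb h x
end
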